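/- Let L ∈ ℝ^{2n×2} have full column rank, set β_j = (det(LᵀL))^{1/4}, and let β ≥ β_j. Define c̃ = ‖L₂‖₂/β and f̃ = (−L₁ᵀL₂ ± √(β⁴ − β_j⁴)) / (β ‖L₂‖₂). Then both rows of D̃ Lᵀ, where D̃ = [[c̃, f̃],[0, c̃⁻¹]], have Euclidean norm exactly β. -/

import Mathlib

open Matrix

noncomputable def vecEnorm {m : ℕ} (v : Fin m → ℝ) : ℝ := Real.sqrt (∑ i, v i ^ 2)

noncomputable def frob {m n : ℕ} (A : Matrix (Fin m) (Fin n) ℝ) : ℝ :=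
  Real.sqrt (∑ i, ∑ j, A i j ^ 2)

noncomputable def specNorm {m n : ℕ} (A : Matrix (Fin m) (Fin n) ℝ) : ℝ :=
  ‖(Matrix.toEuclideanLin A).toContinuousLinearMap‖

noncomputable def sigmaMax (B : Matrix (Fin 2) (Fin 2) ℝ) : ℝ :=
  Real.sqrt (max ((show (Bᵀ * B).IsHermitian by
                    simpa using Matrix.isHermitian_conjTranspose_mul_self B).eigenvalues 0)
                 ((show (Bᵀ * B).IsHermitian by
                    simpa using Matrix.isHermitian_conjTranspose_mul_self B).eigenvalues 1))

noncomputable def sigmaMin (B : Matrix (Fin 2) (Fin 2) ℝ) : ℝ :=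
  Real.sqrt (min ((show (Bᵀ * B).IsHermitian by
                    simpa using Matrix.isHermitian_conjTranspose_mul_self B).eigenvalues 0)
                 ((show (Bᵀ * B).IsHermitian by
                    simpa using Matrix.isHermitian_conjTranspose_mul_self B).eigenvalues 1))

/-
The rows of `D * Lᵀ` have squared norms the diagonal entries of `D * G * Dᵀ`, where
`G = Lᵀ * L = !![a, b; b, c]` is the Gram matrix of the columns, so only `a`, `b`, `c` matter.
For `D = !![c̃, f̃; 0, c̃⁻¹]` the `(1,1)` entry is `c / c̃² = β²`. Writing `f̃ = u / (β √c)` with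
`u = -b ± s`, `s² = β⁴ - (a c - b²)`, the `(0,0)` entry is
`(a c + 2 b u + u²) / β² = (a c - b² + (u + b)²) / β² = β²`.
-/

lemma vecEnorm_row_eq_sqrt_mul_transpose {m n : ℕ} (A : Matrix (Fin m) (Fin n) ℝ) (i : Fin m) :
    vecEnorm (A i) = √((A * Aᵀ) i i) := by
  simp only [vecEnorm, mul_apply, transpose_apply, sq]

lemma vecEnorm_row_mul_transpose {k m p : ℕ} (D : Matrix (Fin k) (Fin p) ℝ)
    (L : Matrix (Fin m) (Fin p) ℝ) (i : Fin k) :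
    vecEnorm ((D * Lᵀ) i) = √((D * (Lᵀ * L) * Dᵀ) i i) := by
  rw [vecEnorm_row_eq_sqrt_mul_transpose, transpose_mul, transpose_transpose, Matrix.mul_assoc,
    Matrix.mul_assoc, Matrix.mul_assoc]

lemma posDef_transpose_mul_self {m n : Type*} [Fintype m] [Fintype n]
    (L : Matrix m n ℝ) (h : LinearIndependent ℝ L.col) : (Lᵀ * L).PosDef := by
  simpa using PosDef.conjTranspose_mul_self L (mulVec_injective_iff.mpr h)

lemma transpose_mul_self_eq_fin_two {m : Type*} [Fintype m] (L : Matrix m (Fin 2) ℝ) :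
    Lᵀ * L = !![(Lᵀ * L) 0 0, (Lᵀ * L) 0 1; (Lᵀ * L) 0 1, (Lᵀ * L) 1 1] := by
  have h10 : (Lᵀ * L) 1 0 = (Lᵀ * L) 0 1 := by simp only [mul_apply, transpose_apply, mul_comm]
  nth_rw 1 [eta_fin_two (Lᵀ * L)]
  rw [h10]

lemma equilibrated_diag_fin_two {a b c β ε ct ft : ℝ} (hc : 0 < c) (hβ : 0 < β)
    (hε : ε ^ 2 = 1) (hdet : a * c - b ^ 2 ≤ β ^ 4) (hct : ct = √c / β)
    (hft : ft = (-b + ε * √(β ^ 4 - (a * c - b ^ 2))) / (β * √c)) :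
    (!![ct, ft; 0, ct⁻¹] * !![a, b; b, c] * !![ct, ft; 0, ct⁻¹]ᵀ) 0 0 = β ^ 2 ∧
      (!![ct, ft; 0, ct⁻¹] * !![a, b; b, c] * !![ct, ft; 0, ct⁻¹]ᵀ) 1 1 = β ^ 2 := by
  have hsc : 0 < √c := Real.sqrt_pos.mpr hc
  have hc2 : √c ^ 2 = c := Real.sq_sqrt hc.le
  have hs2 : √(β ^ 4 - (a * c - b ^ 2)) ^ 2 = β ^ 4 - (a * c - b ^ 2) :=
    Real.sq_sqrt (by linarith)
  simp only [mul_apply, Fin.sum_univ_two, transpose_apply, of_apply, cons_val', cons_val_zero,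
    cons_val_one, cons_val_fin_one]
  subst hct hft
  generalize √(β ^ 4 - (a * c - b ^ 2)) = s at hs2 ⊢
  generalize √c = r at hsc hc2 ⊢
  subst hc2
  constructor
  · field_simp
    linear_combination s ^ 2 * hε + hs2
  · field_simp
    ring

theorem rows_of_equilibrated_scaling {n : ℕ}
    (L : Matrix (Fin (2*n)) (Fin 2) ℝ)
    (hLI : LinearIndependent ℝ ![fun i => L i 0, fun i => L i 1])
    (βj β : ℝ)
    (hβj : βj = Real.sqrt (Real.sqrt (Lᵀ * L).det))
    (hβ : βj ≤ β)
    (ε : ℝ) (hε : ε = 1 ∨ ε = -1)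
    (ct ft : ℝ)
    (hct : ct = vecEnorm (fun i => L i 1) / β)
    (hft : ft = (-(∑ i, L i 0 * L i 1) + ε * Real.sqrt (β ^ 4 - βj ^ 4)) /
        (β * vecEnorm (fun i => L i 1))) :
    vecEnorm (fun j => ((!![ct, ft; 0, ct⁻¹] : Matrix (Fin 2) (Fin 2) ℝ) * Lᵀ) 0 j) = β ∧
    vecEnorm (fun j => ((!![ct, ft; 0, ct⁻¹] : Matrix (Fin 2) (Fin 2) ℝ) * Lᵀ) 1 j) = β := by
  have hcols : ![fun i => L i 0, fun i => L i 1] = L.col := by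
    ext k i; fin_cases k <;> rfl
  have hG := posDef_transpose_mul_self L (hcols ▸ hLI)
  obtain ⟨a, b, c, hGabc⟩ : ∃ a b c, Lᵀ * L = !![a, b; b, c] :=
    ⟨_, _, _, transpose_mul_self_eq_fin_two L⟩
  have hc : 0 < c := by simpa [hGabc] using hG.diag_pos (i := 1)
  have hb : ∑ i, L i 0 * L i 1 = b := congrFun (congrFun hGabc 0) 1
  have hnorm : vecEnorm (fun i => L i 1) = √c := by
    change vecEnorm (Lᵀ 1) = √c
    rw [vecEnorm_row_eq_sqrt_mul_transpose, transpose_transpose, hGabc]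
    rfl
  have hβj4 : βj ^ 4 = a * c - b ^ 2 := by
    rw [hβj, show 4 = 2 * 2 from rfl, pow_mul, Real.sq_sqrt (Real.sqrt_nonneg _),
      Real.sq_sqrt hG.det_pos.le, hGabc, det_fin_two_of, sq]
  have hβj0 : 0 < βj := by rw [hβj]; exact Real.sqrt_pos.mpr (Real.sqrt_pos.mpr hG.det_pos)
  have hβ0 : 0 < β := hβj0.trans_le hβ
  have hε2 : ε ^ 2 = 1 := by rcases hε with rfl | rfl <;> norm_num
  rw [hβj4, hb, hnorm] at hft
  rw [hnorm] at hct
  obtain ⟨h0, h1⟩ := equilibrated_diag_fin_two hc hβ0 hε2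
    (hβj4 ▸ pow_le_pow_left₀ hβj0.le hβ 4) hct hft
  rw [vecEnorm_row_mul_transpose, vecEnorm_row_mul_transpose, hGabc, h0, h1,
    Real.sqrt_sq hβ0.le]
  exact ⟨rfl, rfl⟩
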